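/- Define the vector field X₀ on ℝ⁴ by X₀(θ,x₁,x₂,x₃) = (x₁²+x₂²−2x₃²)·e₀ − 3x₂x₃·e₁ + 3x₁x₃·e₂. Then for every point p = (θ,x₁,x₂,x₃), λ(p)(X₀(p)) = −½(x₁²+x₂²−2x₃²)² − 3x₃²(x₁²+x₂²) = −(½(x₁²+x₂²)² + (x₁²+x₂²)x₃² + 2x₃⁴), and this quantity is strictly negative unless x₁ = x₂ = x₃ = 0. Consequently, at every point with (x₁,x₂,x₃) ≠ 0 the vector field X := X₀ / λ(X₀) is well defined and satisfies λ(X) = 1. -/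

import Mathlib

/-!
Writing `s = x₁² + x₂²` and `t = x₃²`, one finds `λ(X₀) = -(s²/2 + s t + 2 t²)`, and the binary
quadratic form `s²/2 + s t + 2 t² = (s + t)²/2 + 3 t²/2` is positive definite. Since `λ(p)` is
linear, dividing `X₀` by the nonzero number `λ(X₀)` normalizes it.
-/

noncomputable section

/-- The 1-form λ = −½(x₁²+x₂²−2x₃²)dθ + x₂x₃dx₁ − x₁x₃dx₂ on ℝ⁴. -/
def lamA (p v : Fin 4 → ℝ) : ℝ :=
  -(1 / 2) * (p 1 ^ 2 + p 2 ^ 2 - 2 * p 3 ^ 2) * v 0 + p 2 * p 3 * v 1 - p 1 * p 3 * v 2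

/-- The vector field X₀ = (x₁²+x₂²−2x₃²)e₀ − 3x₂x₃e₁ + 3x₁x₃e₂. -/
def X0 (p : Fin 4 → ℝ) : Fin 4 → ℝ :=
  ![p 1 ^ 2 + p 2 ^ 2 - 2 * p 3 ^ 2, -3 * p 2 * p 3, 3 * p 1 * p 3, 0]

theorem lamA_smul (p v : Fin 4 → ℝ) (c : ℝ) : lamA p (c • v) = c * lamA p v := by
  simp only [lamA, Pi.smul_apply, smul_eq_mul]
  ring

theorem lamA_inv_smul_self {p v : Fin 4 → ℝ} (h : lamA p v ≠ 0) :
    lamA p ((lamA p v)⁻¹ • v) = 1 := by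
  rw [lamA_smul, inv_mul_cancel₀ h]

theorem lamA_X0 (p : Fin 4 → ℝ) :
    lamA p (X0 p)
      = -(1 / 2) * (p 1 ^ 2 + p 2 ^ 2 - 2 * p 3 ^ 2) ^ 2
        - 3 * p 3 ^ 2 * (p 1 ^ 2 + p 2 ^ 2) := by
  simp only [lamA, X0, Matrix.cons_val]
  ring

theorem quadratic_form_pos {s t : ℝ} (h : s ≠ 0 ∨ t ≠ 0) :
    0 < (1 / 2) * s ^ 2 + s * t + 2 * t ^ 2 := by
  have key : (1 / 2) * s ^ 2 + s * t + 2 * t ^ 2 = (1 / 2) * (s + t) ^ 2 + (3 / 2) * t ^ 2 := by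
    ring
  rw [key]
  rcases eq_or_ne t 0 with rfl | ht
  · simpa [sq_pos_iff] using h
  · positivity

theorem sum_sq_ne_zero_or_sq_ne_zero {a b c : ℝ} (h : ¬(a = 0 ∧ b = 0 ∧ c = 0)) :
    a ^ 2 + b ^ 2 ≠ 0 ∨ c ^ 2 ≠ 0 := by
  contrapose! h
  obtain ⟨hab, hc⟩ := h
  obtain ⟨ha, hb⟩ := (add_eq_zero_iff_of_nonneg (sq_nonneg a) (sq_nonneg b)).mp hab
  exact ⟨pow_eq_zero_iff two_ne_zero |>.mp ha, pow_eq_zero_iff two_ne_zero |>.mp hb,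
    pow_eq_zero_iff two_ne_zero |>.mp hc⟩

/-- λ(X₀) = −½(x₁²+x₂²−2x₃²)² − 3x₃²(x₁²+x₂²) = −(½(x₁²+x₂²)² + (x₁²+x₂²)x₃² + 2x₃⁴),
which is strictly negative unless x₁=x₂=x₃=0; hence off the singular circle the
normalized vector field X = X₀/λ(X₀) satisfies λ(X) = 1. -/
theorem lambda_X0 (p : Fin 4 → ℝ) :
    lamA p (X0 p)
      = -(1 / 2) * (p 1 ^ 2 + p 2 ^ 2 - 2 * p 3 ^ 2) ^ 2
        - 3 * p 3 ^ 2 * (p 1 ^ 2 + p 2 ^ 2) ∧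
    lamA p (X0 p)
      = -((1 / 2) * (p 1 ^ 2 + p 2 ^ 2) ^ 2 + (p 1 ^ 2 + p 2 ^ 2) * p 3 ^ 2
          + 2 * p 3 ^ 4) ∧
    (¬(p 1 = 0 ∧ p 2 = 0 ∧ p 3 = 0) →
      lamA p (X0 p) < 0 ∧ lamA p ((lamA p (X0 p))⁻¹ • X0 p) = 1) := by
  have hform : lamA p (X0 p)
      = -((1 / 2) * (p 1 ^ 2 + p 2 ^ 2) ^ 2 + (p 1 ^ 2 + p 2 ^ 2) * p 3 ^ 2
          + 2 * p 3 ^ 4) := by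
    rw [lamA_X0]
    ring
  refine ⟨lamA_X0 p, hform, fun h => ?_⟩
  have hneg : lamA p (X0 p) < 0 := by
    have hpos := quadratic_form_pos (sum_sq_ne_zero_or_sq_ne_zero h)
    rw [hform]
    linarith
  exact ⟨hneg, lamA_inv_smul_self hneg.ne⟩
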